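/- Let R be an F-finite F-split ring of characteristic p and 𝔞 ⊆ R an ideal generated by r elements. If n is a differential jump of level e of 𝔞 (i.e., D^{(e)}·𝔞^n ≠ D^{(e)}·𝔞^{n+1}), then for every a ≥ 0 there exists a differential jump of level e+a of 𝔞 in the interval [n·p^a, n·p^a + r(p^a - 1)]. -/
import Mathlib


/-- A differential operator of level `e`: an `R^{p^e}`-linear endomorphism of `R`. -/
def IsDiffOp {R : Type*} [CommRing R] (p e : ℕ) (δ : R →+ R) : Prop :=
  ∀ c x : R, δ (c ^ p ^ e * x) = c ^ p ^ e * δ x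

/-- The ideal `D^{(e)} · J` generated by the images of elements of `J` under all
differential operators of level `e`. -/
def DIdeal {R : Type*} [CommRing R] (p e : ℕ) (J : Ideal R) : Ideal R :=
  Ideal.span {y : R | ∃ δ : R →+ R, IsDiffOp p e δ ∧ ∃ x ∈ J, δ x = y}

/-- `R` is F-finite: `R` is a finitely generated module over its subring of
`p`-th powers. -/
def FFinite (p : ℕ) (R : Type*) [CommRing R] : Prop :=
  ∃ s : Finset R, ∀ x : R, ∃ c : R → R, x = ∑ y ∈ s, c y ^ p * y

/-- `R` is F-split: the Frobenius admits an `R`-linear splitting. -/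
def FSplit (p : ℕ) (R : Type*) [CommRing R] : Prop :=
  ∃ σ : R →+ R, σ 1 = 1 ∧ ∀ c x : R, σ (c ^ p * x) = c * σ x

section Aux

variable {R : Type*} [CommRing R] (p : ℕ)

/-- The Frobenius power `J^{[p]}`: the ideal generated by `p`-th powers of elements of `J`. -/
def FPow (J : Ideal R) : Ideal R := Ideal.span {y : R | ∃ x ∈ J, y = x ^ p}

lemma mem_DIdeal {e : ℕ} {J : Ideal R} (δ : R →+ R) (hδ : IsDiffOp p e δ) {x : R}
    (hx : x ∈ J) : δ x ∈ DIdeal p e J :=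
  Ideal.subset_span ⟨δ, hδ, x, hx, rfl⟩

lemma DIdeal_mono {e : ℕ} {J K : Ideal R} (h : J ≤ K) : DIdeal p e J ≤ DIdeal p e K :=
  Ideal.span_mono (fun y ⟨δ, hδ, x, hx, hxy⟩ => ⟨δ, hδ, x, h hx, hxy⟩)

lemma FPow_mono {J K : Ideal R} (h : J ≤ K) : FPow p J ≤ FPow p K :=
  Ideal.span_mono (fun y ⟨x, hx, hxy⟩ => ⟨x, h hx, hxy⟩)

lemma FPow_pow_le (J : Ideal R) (n : ℕ) : FPow p (J ^ n) ≤ J ^ (n * p) := by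
  rw [FPow, Ideal.span_le]
  rintro y ⟨x, hx, rfl⟩
  rw [pow_mul]
  exact Ideal.pow_mem_pow hx p

lemma prod_pow_mem (I : Ideal R) {r : ℕ} (g : Fin r → R) (h : ∀ i, g i ∈ I)
    (b : Fin r → ℕ) : (∏ i, g i ^ b i) ∈ I ^ (∑ i, b i) := by
  classical
  induction r with
  | zero => simp [Ideal.one_eq_top]
  | succ r ih =>
      rw [Fin.prod_univ_succ, Fin.sum_univ_succ, pow_add]
      exact Ideal.mul_mem_mul (Ideal.pow_mem_pow (h 0) _) (ih _ (fun i => h i.succ) _)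

lemma pow_le_span_monomials {r : ℕ} (f : Fin r → R) (N : ℕ) :
    (Ideal.span (Set.range f)) ^ N ≤
      Ideal.span {x : R | ∃ d : Fin r → ℕ, (∑ i, d i) = N ∧ x = ∏ i, f i ^ d i} := by
  induction N with
  | zero =>
      rw [pow_zero, Ideal.one_eq_top]
      have h1 : (1 : R) ∈ {x : R | ∃ d : Fin r → ℕ, (∑ i, d i) = 0 ∧ x = ∏ i, f i ^ d i} :=
        ⟨fun _ => 0, by simp, by simp⟩
      intro x _
      exact Ideal.mem_of_dvd _ ⟨x, (one_mul x).symm⟩ (Ideal.subset_span h1)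
  | succ N ih =>
      rw [pow_succ]
      calc (Ideal.span (Set.range f)) ^ N * Ideal.span (Set.range f)
          ≤ Ideal.span {x : R | ∃ d : Fin r → ℕ, (∑ i, d i) = N ∧ x = ∏ i, f i ^ d i} *
            Ideal.span (Set.range f) := Ideal.mul_mono_left ih
        _ ≤ _ := by
            rw [Ideal.span_mul_span', Ideal.span_le]
            rintro z ⟨x, ⟨d, hd, rfl⟩, y, ⟨i, rfl⟩, rfl⟩
            classical
            refine Ideal.subset_span ⟨fun j => d j + if j = i then 1 else 0, ?_, ?_⟩
            · rw [Finset.sum_add_distrib, hd]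
              simp
            · show (∏ j, f j ^ d j) * f i = _
              have hterm : ∀ j, f j ^ (d j + if j = i then 1 else 0) =
                  f j ^ d j * (if j = i then f j else 1) := fun j => by
                split <;> simp [pow_add]
              rw [Finset.prod_congr rfl (fun j _ => hterm j), Finset.prod_mul_distrib]
              congr 1
              simp

lemma pigeonhole (hp : p.Prime) {r : ℕ} (f : Fin r → R) (n : ℕ) :
    (Ideal.span (Set.range f)) ^ (n * p + r * (p - 1) + 1) ≤
      FPow p ((Ideal.span (Set.range f)) ^ (n + 1)) := by
  set N := n * p + r * (p - 1) + 1
  refine le_trans (pow_le_span_monomials f N) ?_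
  rw [Ideal.span_le]
  rintro x ⟨d, hd, rfl⟩
  have hp2 : 2 ≤ p := hp.two_le
  -- split exponents d i = p * (d i / p) + d i % p
  have key : (∏ i, f i ^ d i) =
      (∏ i, f i ^ (d i / p)) ^ p * ∏ i, f i ^ (d i % p) := by
    rw [← Finset.prod_pow, ← Finset.prod_mul_distrib]
    refine Finset.prod_congr rfl fun i _ => ?_
    rw [← pow_mul, ← pow_add]
    congr 1
    exact (Nat.div_add_mod' (d i) p).symm
  have hsum : n + 1 ≤ ∑ i, d i / p := by
    by_contra hcon
    push_neg at hcon
    have h1 : ∀ i, d i ≤ p * (d i / p) + (p - 1) := fun i => by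
      have := Nat.mod_lt (d i) (by omega : 0 < p)
      have := Nat.div_add_mod (d i) p
      omega
    have h2 : (∑ i, d i) ≤ p * (∑ i, d i / p) + r * (p - 1) := by
      calc (∑ i, d i) ≤ ∑ i, (p * (d i / p) + (p - 1)) := Finset.sum_le_sum fun i _ => h1 i
        _ = p * (∑ i, d i / p) + r * (p - 1) := by
            rw [Finset.sum_add_distrib, Finset.mul_sum]
            simp [mul_comm]
    have h3 : (∑ i, d i / p) ≤ n := by omega
    have h4 : p * (∑ i, d i / p) ≤ n * p := by
      rw [mul_comm]; exact Nat.mul_le_mul_right p h3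
    have h5 : n * p + r * (p - 1) + 1 ≤ n * p + r * (p - 1) := by
      have := le_trans (hd ▸ h2) (Nat.add_le_add_right h4 _)
      simpa [N] using this
    exact Nat.lt_irrefl _ h5
  rw [key]
  refine Ideal.mul_mem_right _ _ ?_
  have hmem : (∏ i, f i ^ (d i / p)) ∈ (Ideal.span (Set.range f)) ^ (n + 1) := by
    have := prod_pow_mem (Ideal.span (Set.range f)) f
      (fun i => Ideal.subset_span ⟨i, rfl⟩) (fun i => d i / p)
    exact Ideal.pow_le_pow_right hsum this
  exact Ideal.subset_span ⟨_, hmem, rfl⟩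

variable [CharP R p]

/-- The key descent lemma: in an F-finite F-split ring, an inclusion of
`D`-ideals of Frobenius powers at level `e+1` descends to level `e`. -/
lemma key_descent (hp : p.Prime) (hFF : FFinite p R) (hFS : FSplit p R) (e : ℕ)
    {J K : Ideal R}
    (h : DIdeal p (e + 1) (FPow p J) ≤ DIdeal p (e + 1) (FPow p K)) :
    DIdeal p e J ≤ DIdeal p e K := by
  haveI : Fact p.Prime := ⟨hp⟩
  obtain ⟨σ, hσ1, hσ⟩ := hFS
  obtain ⟨S, hS⟩ := hFF
  have hσp : ∀ x : R, σ (x ^ p) = x := fun x => by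
    have := hσ x 1
    rwa [mul_one, hσ1, mul_one] at this
  -- Step 1: for y ∈ FPow p K, s : R, ε a diff op of level e+1, σ (s * ε y) ∈ DIdeal p e K
  have step1 : ∀ y ∈ FPow p K, ∀ (s : R) (ε : R →+ R), IsDiffOp p (e + 1) ε →
      σ (s * ε y) ∈ DIdeal p e K := by
    intro y hy
    refine Submodule.span_induction ?_ ?_ ?_ ?_ hy
    · rintro y ⟨x, hx, rfl⟩ s ε hε
      set δ : R →+ R := AddMonoidHom.mk' (fun z => σ (s * ε (z ^ p))) (by
        intro a b
        show σ (s * ε ((a + b) ^ p)) = σ (s * ε (a ^ p)) + σ (s * ε (b ^ p))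
        rw [add_pow_char, map_add, mul_add, map_add]) with hδdef
      have hδ : IsDiffOp p e δ := by
        intro c z
        simp only [hδdef, AddMonoidHom.mk'_apply]
        rw [mul_pow, ← pow_mul, ← pow_succ]
        rw [hε c (z ^ p), ← mul_assoc, mul_comm s (c ^ p ^ (e + 1)), mul_assoc,
          pow_succ, pow_mul, hσ]
      exact mem_DIdeal p δ hδ hx
    · intro s ε hε
      simp
    · intro y z hy hz ihy ihz s ε hε
      rw [map_add, mul_add, map_add]
      exact Ideal.add_mem _ (ihy s ε hε) (ihz s ε hε)
    · intro c y hy ih s ε hε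
      have hε' : IsDiffOp p (e + 1) (ε.comp (AddMonoidHom.mulLeft c)) := by
        intro b z
        simp only [AddMonoidHom.coe_comp, Function.comp_apply, AddMonoidHom.coe_mulLeft]
        rw [mul_left_comm, hε]
      have := ih s (ε.comp (AddMonoidHom.mulLeft c)) hε'
      simpa using this
  -- Step 2: for w ∈ DIdeal p (e+1) (FPow p K), t : R, σ (t * w) ∈ DIdeal p e K
  have step2 : ∀ w ∈ DIdeal p (e + 1) (FPow p K), ∀ t : R,
      σ (t * w) ∈ DIdeal p e K := by
    intro w hw
    refine Submodule.span_induction ?_ ?_ ?_ ?_ hw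
    · rintro w ⟨ε, hε, y, hy, rfl⟩ t
      obtain ⟨u, hu⟩ := hS t
      rw [hu, Finset.sum_mul, map_sum]
      refine Ideal.sum_mem _ fun s hs => ?_
      rw [mul_assoc, hσ]
      exact Ideal.mul_mem_left _ _ (step1 y hy s ε hε)
    · intro t; simp
    · intro w w' hw hw' ihw ihw' t
      rw [mul_add, map_add]
      exact Ideal.add_mem _ (ihw t) (ihw' t)
    · intro c w hw ih t
      rw [smul_eq_mul, ← mul_assoc]
      exact ih (t * c)
  -- Main argument
  rw [DIdeal, Ideal.span_le]
  rintro y ⟨δ, hδ, x, hx, rfl⟩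
  set ε : R →+ R := AddMonoidHom.mk' (fun z => (δ (σ z)) ^ p) (by
    intro a b
    show (δ (σ (a + b))) ^ p = (δ (σ a)) ^ p + (δ (σ b)) ^ p
    rw [map_add, map_add, add_pow_char]) with hεdef
  have hε : IsDiffOp p (e + 1) ε := by
    intro c z
    simp only [hεdef, AddMonoidHom.mk'_apply]
    rw [pow_succ, pow_mul, hσ, hδ, mul_pow, ← pow_mul, ← pow_succ]
  have hmem : ε (x ^ p) ∈ DIdeal p (e + 1) (FPow p J) :=
    mem_DIdeal p ε hε (Ideal.subset_span ⟨x, hx, rfl⟩)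
  have hεx : ε (x ^ p) = (δ x) ^ p := by
    simp only [hεdef, AddMonoidHom.mk'_apply, hσp]
  have : σ (1 * ε (x ^ p)) ∈ DIdeal p e K := step2 _ (h hmem) 1
  rwa [one_mul, hεx, hσp] at this

/-- One step of the propagation: a jump at level `e` gives a jump at level `e+1`
in the interval `[n·p, n·p + r(p-1)]`. -/
lemma step_lemma (hp : p.Prime) (hFF : FFinite p R) (hFS : FSplit p R)
    {r : ℕ} (f : Fin r → R) (e n : ℕ)
    (hjump : DIdeal p e ((Ideal.span (Set.range f)) ^ n) ≠
      DIdeal p e ((Ideal.span (Set.range f)) ^ (n + 1))) :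
    ∃ m : ℕ, n * p ≤ m ∧ m ≤ n * p + r * (p - 1) ∧
      DIdeal p (e + 1) ((Ideal.span (Set.range f)) ^ m) ≠
        DIdeal p (e + 1) ((Ideal.span (Set.range f)) ^ (m + 1)) := by
  set 𝔞 := Ideal.span (Set.range f) with h𝔞
  by_contra hcon
  push_neg at hcon
  -- all consecutive D-ideals in the range are equal, so the extremes are equal
  have hchain : ∀ k, k ≤ r * (p - 1) + 1 →
      DIdeal p (e + 1) (𝔞 ^ (n * p)) = DIdeal p (e + 1) (𝔞 ^ (n * p + k)) := by
    intro k hk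
    induction k with
    | zero => rfl
    | succ k ih =>
        rw [ih (by omega)]
        exact hcon (n * p + k) (by omega) (by omega)
  have hext : DIdeal p (e + 1) (𝔞 ^ (n * p)) =
      DIdeal p (e + 1) (𝔞 ^ (n * p + (r * (p - 1) + 1))) := hchain _ le_rfl
  have h1 : DIdeal p (e + 1) (FPow p (𝔞 ^ n)) ≤ DIdeal p (e + 1) (𝔞 ^ (n * p)) :=
    DIdeal_mono p (FPow_pow_le p 𝔞 n)
  have h2 : DIdeal p (e + 1) (𝔞 ^ (n * p + (r * (p - 1) + 1))) ≤
      DIdeal p (e + 1) (FPow p (𝔞 ^ (n + 1))) := by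
    refine DIdeal_mono p ?_
    have := pigeonhole p hp f n
    simpa [h𝔞, add_assoc] using this
  have hkey : DIdeal p (e + 1) (FPow p (𝔞 ^ n)) ≤
      DIdeal p (e + 1) (FPow p (𝔞 ^ (n + 1))) :=
    le_trans h1 (le_trans (le_of_eq hext) h2)
  have hdown : DIdeal p e (𝔞 ^ n) ≤ DIdeal p e (𝔞 ^ (n + 1)) :=
    key_descent p hp hFF hFS e hkey
  have hup : DIdeal p e (𝔞 ^ (n + 1)) ≤ DIdeal p e (𝔞 ^ n) :=
    DIdeal_mono p (Ideal.pow_le_pow_right (Nat.le_succ n))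
  exact hjump (le_antisymm hdown hup)

end Aux

theorem stmt12 {R : Type*} [CommRing R] (p : ℕ) (hp : p.Prime) [CharP R p]
    (hFF : FFinite p R) (hFS : FSplit p R)
    (r : ℕ) (f : Fin r → R) (𝔞 : Ideal R) (h𝔞 : 𝔞 = Ideal.span (Set.range f))
    (e n : ℕ) (hjump : DIdeal p e (𝔞 ^ n) ≠ DIdeal p e (𝔞 ^ (n + 1))) :
    ∀ a : ℕ, ∃ m : ℕ, n * p ^ a ≤ m ∧ m ≤ n * p ^ a + r * (p ^ a - 1) ∧
      DIdeal p (e + a) (𝔞 ^ m) ≠ DIdeal p (e + a) (𝔞 ^ (m + 1)) := by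
  subst h𝔞
  intro a
  induction a with
  | zero => exact ⟨n, by simp, by simp, hjump⟩
  | succ a ih =>
      obtain ⟨m, hm1, hm2, hm3⟩ := ih
      obtain ⟨m', hm'1, hm'2, hm'3⟩ := step_lemma p hp hFF hFS f (e + a) m hm3
      have hp2 : 2 ≤ p := hp.two_le
      have hpa : 1 ≤ p ^ a := Nat.one_le_pow _ _ (by omega)
      refine ⟨m', ?_, ?_, ?_⟩
      · calc n * p ^ (a + 1) = n * p ^ a * p := by ring
          _ ≤ m * p := Nat.mul_le_mul_right p hm1
          _ ≤ m' := hm'1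
      · have hb : m * p ≤ (n * p ^ a + r * (p ^ a - 1)) * p := Nat.mul_le_mul_right p hm2
        have harith : (n * p ^ a + r * (p ^ a - 1)) * p + r * (p - 1) =
            n * p ^ (a + 1) + r * (p ^ (a + 1) - 1) := by
          obtain ⟨Q, hQ⟩ : ∃ Q, p ^ a * p = Q := ⟨_, rfl⟩
          have hpQ : p ≤ Q := by
            rw [← hQ]; exact Nat.le_mul_of_pos_left p hpa
          rw [pow_succ, add_mul, mul_assoc, mul_assoc, Nat.sub_mul, one_mul, hQ]
          rw [Nat.mul_sub, Nat.mul_sub, Nat.mul_sub, mul_one]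
          have h1 : r * p ≤ r * Q := Nat.mul_le_mul_left r hpQ
          have h2 : r ≤ r * p := Nat.le_mul_of_pos_right r (by omega)
          omega
        calc m' ≤ m * p + r * (p - 1) := hm'2
          _ ≤ (n * p ^ a + r * (p ^ a - 1)) * p + r * (p - 1) := by omega
          _ = n * p ^ (a + 1) + r * (p ^ (a + 1) - 1) := harith
      · have : e + a + 1 = e + (a + 1) := by omega
        rwa [this] at hm'3
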